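/- Let s ≥ 2 be an integer, q = 2^s, m ≥ 2 an integer with m ≡ 2 (mod 4), and n = q^m − 1. Then the minimum distance of C_{(q,m;1)} satisfies: d(C_{(q,m;1)}) ≥ (q+2)/2 if m = 2, and d(C_{(q,m;1)}) ≥ q^{(m−2)/2} + 2q − 1 if m ≥ 6. -/

import Mathlib

open Finset

/-- The `q`-weight of a nonnegative integer: the sum of its base-`q` digits. -/
def qWeight (q i : ℕ) : ℕ := (Nat.digits q i).sum

/-- The set `T_{(q,m;j)} = {i : 1 ≤ i ≤ q^m − 2, wt_q(i) ≡ j (mod 2)}`. -/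
def Tset (q m j : ℕ) : Set ℕ :=
  {i | 1 ≤ i ∧ i ≤ q ^ m - 2 ∧ qWeight q i % 2 = j}

/-- The cyclic code of length `n` over `F` with defining set `T` with respect to `β ∈ E`:
all words `(c_0, …, c_{n-1})` with `∑_j c_j β^{k j} = 0` for every `k ∈ T`. -/
def cyclicCode (F E : Type*) [Field F] [Field E] [Algebra F E]
    (n : ℕ) (β : E) (T : Set ℕ) : Submodule F (Fin n → F) where
  carrier := {c | ∀ k ∈ T, ∑ j : Fin n, algebraMap F E (c j) * β ^ (k * (j : ℕ)) = 0}
  add_mem' := by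
    intro a b ha hb k hk
    simp only [Set.mem_setOf_eq, Pi.add_apply, map_add, add_mul] at *
    rw [Finset.sum_add_distrib, ha k hk, hb k hk, add_zero]
  zero_mem' := by
    intro k hk
    simp
  smul_mem' := by
    intro r c hc k hk
    simp only [Set.mem_setOf_eq, Pi.smul_apply, smul_eq_mul, map_mul, mul_assoc] at *
    rw [← Finset.mul_sum, hc k hk, mul_zero]

/-- The minimum distance of a code: the least Hamming weight of a nonzero codeword. -/
noncomputable def minDist {F : Type*} [Field F] [DecidableEq F] {n : ℕ}
    (C : Submodule F (Fin n → F)) : ℕ :=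
  sInf {w | ∃ c ∈ C, c ≠ 0 ∧ hammingNorm c = w}

/-!
The defining set `T_{(q,m;1)}` contains a long arithmetic progression whose common difference
is prime to `n`, so the BCH bound (a Vandermonde determinant) bounds the minimum distance by
its length plus one.

For `m = 2` the progression is `q, q + 2, …, 2q - 2`, of `q`-weights `1, 3, …, q - 1`.
For `m = 2e + 2 ≥ 6` put `P = q^e`; the progression is `(q + 2)P² + k(P + 1)` for
`-(q - 1) ≤ k ≤ P + q - 2`. Its base-`P` digits are `(k, k, q + 2)` for `0 ≤ k < P`,
`(u, u + 1, q + 3)` for `k = P + u`, and `(r + 1, r, q + 1)` with `q ∤ r + 1` for `k < 0`,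
so every term has odd `q`-weight. Since `P + 1 ∣ q^{2e} - 1`, `gcd(P + 1, q^m - 1)` divides
`q^{gcd(2e, 2e + 2)} - 1 = q² - 1`, a divisor of `P - 1` as `e` is even; hence it divides `2`,
while `q^m - 1` is odd.
-/
section qWeight

variable {q e : ℕ}

lemma qWeight_eq_mod_add_div (hq : 1 < q) (i : ℕ) : qWeight q i = i % q + qWeight q (i / q) := by
  rcases i.eq_zero_or_pos with rfl | hi
  · simp [qWeight]
  · rw [qWeight, Nat.digits_def' hq hi, List.sum_cons, qWeight]

lemma qWeight_add_mul (hq : 1 < q) {d : ℕ} (hd : d < q) (x : ℕ) :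
    qWeight q (d + q * x) = d + qWeight q x := by
  rw [qWeight_eq_mod_add_div hq, Nat.add_mul_mod_self_left, Nat.mod_eq_of_lt hd,
    Nat.add_mul_div_left _ _ (by omega), Nat.div_eq_of_lt hd, zero_add]

lemma qWeight_of_lt (hq : 1 < q) {d : ℕ} (hd : d < q) : qWeight q d = d := by
  simpa [qWeight] using qWeight_add_mul hq hd 0

lemma qWeight_add_pow_mul (hq : 1 < q) {j r : ℕ} (hr : r < q ^ j) (x : ℕ) :
    qWeight q (r + q ^ j * x) = qWeight q r + qWeight q x := by
  induction j generalizing r with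
  | zero => simp_all [qWeight]
  | succ j ih =>
    have hr' : r / q < q ^ j := Nat.div_lt_of_lt_mul (by rwa [← pow_succ'])
    have hsplit : r + q ^ (j + 1) * x = r % q + q * (r / q + q ^ j * x) := by
      rw [pow_succ', mul_add, ← add_assoc, Nat.mod_add_div, mul_assoc]
    rw [hsplit, qWeight_add_mul hq (Nat.mod_lt r (by omega)), ih hr', qWeight_eq_mod_add_div hq r,
      add_assoc]

lemma qWeight_succ (hq : 1 < q) {i : ℕ} (hi : ¬ q ∣ i + 1) :
    qWeight q (i + 1) = qWeight q i + 1 := by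
  have hdiv : (i + 1) / q = i / q := Nat.succ_div_of_not_dvd hi
  have hmod : (i + 1) % q = i % q + 1 := by
    have h₁ := Nat.mod_add_div (i + 1) q
    have h₂ := Nat.mod_add_div i q
    rw [hdiv] at h₁
    omega
  rw [qWeight_eq_mod_add_div hq, qWeight_eq_mod_add_div hq i, hmod, hdiv]
  ring

lemma qWeight_sq_mul_add_mul_of_lt (hq : 2 < q) {k : ℕ} (hk : k < q ^ e) :
    qWeight q ((q + 2) * (q ^ e) ^ 2 + k * (q ^ e + 1)) = 2 * qWeight q k + 3 := by
  have hdigits : (q + 2) * (q ^ e) ^ 2 + k * (q ^ e + 1) =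
      k + q ^ e * (k + q ^ e * (2 + q * 1)) := by
    ring
  rw [hdigits, qWeight_add_pow_mul (by omega) hk, qWeight_add_pow_mul (by omega) hk,
    qWeight_add_mul (by omega) hq, qWeight_of_lt (d := 1) (by omega) (by omega)]
  ring

lemma qWeight_sq_mul_add_mul_of_le (hq : 3 < q) (he : 1 ≤ e) {k : ℕ} (hk : q ^ e ≤ k)
    (hk' : k + 1 < q ^ e + q) :
    qWeight q ((q + 2) * (q ^ e) ^ 2 + k * (q ^ e + 1)) = 2 * (k - q ^ e) + 5 := by
  obtain ⟨u, rfl⟩ := Nat.exists_eq_add_of_le hk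
  have hqP : q ≤ q ^ e := Nat.le_self_pow (by omega) q
  have hdigits : (q + 2) * (q ^ e) ^ 2 + (q ^ e + u) * (q ^ e + 1) =
      u + q ^ e * ((u + 1) + q ^ e * (3 + q * 1)) := by
    ring
  rw [hdigits, qWeight_add_pow_mul (by omega) (by omega),
    qWeight_add_pow_mul (by omega) (by omega), qWeight_add_mul (by omega) hq,
    qWeight_of_lt (d := u) (by omega) (by omega),
    qWeight_of_lt (d := u + 1) (by omega) (by omega), qWeight_of_lt (d := 1) (by omega) (by omega)]
  omega

lemma qWeight_of_add_mul_eq_sq_mul (hq : 1 < q) (he : 1 ≤ e) {j x : ℕ} (hj : 0 < j)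
    (hjq : j < q) (hx : x + j * (q ^ e + 1) = (q + 2) * (q ^ e) ^ 2) :
    qWeight q x = 2 * qWeight q (q ^ e - j - 1) + 3 := by
  have hqP : q ≤ q ^ e := Nat.le_self_pow (by omega) q
  obtain ⟨r, hr⟩ : ∃ r, q ^ e = r + j + 1 := ⟨q ^ e - j - 1, by omega⟩
  have hdigits : x = (r + 1) + q ^ e * (r + q ^ e * (1 + q * 1)) := by
    rw [hr] at hx ⊢
    linear_combination hx
  have hndvd : ¬ q ∣ r + 1 := by
    intro h
    have hP : q ∣ r + 1 + j := by
      rw [show r + 1 + j = q ^ e by omega]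
      exact dvd_pow_self q (by omega)
    exact Nat.not_dvd_of_pos_of_lt hj hjq ((Nat.dvd_add_right h).mp hP)
  rw [show q ^ e - j - 1 = r by omega, hdigits, qWeight_add_pow_mul hq (by omega),
    qWeight_add_pow_mul hq (by omega), qWeight_add_mul hq hq, qWeight_of_lt hq hq,
    qWeight_succ hq hndvd]
  ring

end qWeight

lemma sq_mul_sub_add_mul_mem_Tset {q e : ℕ} (hq : 4 ≤ q) (he : 1 ≤ e) {t : ℕ}
    (ht : t < q ^ e + 2 * q - 2) :
    (q + 2) * (q ^ e) ^ 2 - (q - 1) * (q ^ e + 1) + t * (q ^ e + 1) ∈ Tset q (2 * e + 2) 1 := by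
  have hqP : q ≤ q ^ e := Nat.le_self_pow (by omega) q
  have hsub : (q - 1) * (q ^ e + 1) ≤ (q + 2) * (q ^ e) ^ 2 := by
    calc (q - 1) * (q ^ e + 1) ≤ (q + 2) * (q ^ e * q ^ e) :=
          Nat.mul_le_mul (by omega) (by nlinarith)
      _ = (q + 2) * (q ^ e) ^ 2 := by ring
  set x := (q + 2) * (q ^ e) ^ 2 - (q - 1) * (q ^ e + 1) + t * (q ^ e + 1) with hx
  have hodd : qWeight q x % 2 = 1 := by
    rcases lt_or_ge t (q - 1) with ht₁ | ht₁
    · have hx' : x + (q - 1 - t) * (q ^ e + 1) = (q + 2) * (q ^ e) ^ 2 := by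
        rw [hx, add_assoc, ← add_mul, Nat.add_sub_cancel' ht₁.le, Nat.sub_add_cancel hsub]
      rw [qWeight_of_add_mul_eq_sq_mul (by omega) he (by omega) (by omega) hx']
      omega
    · obtain ⟨k, rfl⟩ := Nat.exists_eq_add_of_le ht₁
      have hx' : x = (q + 2) * (q ^ e) ^ 2 + k * (q ^ e + 1) := by
        rw [hx, add_mul (q - 1), ← add_assoc, Nat.sub_add_cancel hsub]
      rcases lt_or_ge k (q ^ e) with hk | hk
      · rw [hx', qWeight_sq_mul_add_mul_of_lt (by omega) hk]
        omega
      · rw [hx', qWeight_sq_mul_add_mul_of_le (by omega) he hk (by omega)]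
        omega
  have hle : x + 2 ≤ q ^ (2 * e + 2) := by
    have hle' : x ≤ (q + 2) * (q ^ e) ^ 2 + t * (q ^ e + 1) :=
      Nat.add_le_add_right (Nat.sub_le _ _) _
    have ht' : t + 3 ≤ q ^ e + 2 * q := by omega
    rw [show 2 * e + 2 = e + e + 2 by ring, pow_add, pow_add, ← sq]
    generalize q ^ e = P at hqP ht' hle'
    nlinarith [Nat.mul_le_mul_right (P + 1) ht', Nat.mul_le_mul_left P hqP,
      Nat.mul_le_mul_left (P * P) hq]
  refine ⟨Nat.pos_of_ne_zero ?_, by omega, hodd⟩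
  rintro h
  simp [h, qWeight] at hodd

lemma add_mul_two_mem_Tset_two {q t : ℕ} (ht : 2 * t + 2 ≤ q) :
    q + t * 2 ∈ Tset q 2 1 := by
  have hweight : qWeight q (q + t * 2) = 2 * t + 1 := by
    rw [show q + t * 2 = 2 * t + q * 1 by ring, qWeight_add_mul (by omega) (by omega),
      qWeight_of_lt (by omega) (by omega)]
  have hq2 : 2 * q ≤ q ^ 2 := by nlinarith
  exact ⟨by omega, show q + t * 2 ≤ q ^ 2 - 2 by omega, by omega⟩

lemma coprime_pow_add_one_pow_sub_one {q e : ℕ} (hq : 0 < q) (hq_even : Even q) (he : Even e) :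
    Nat.Coprime (q ^ e + 1) (q ^ (2 * e + 2) - 1) := by
  set d := Nat.gcd (q ^ e + 1) (q ^ (2 * e + 2) - 1)
  have hd_sq : d ∣ q ^ 2 - 1 := by
    have h₁ : q ^ e + 1 ∣ q ^ (2 * e) - 1 :=
      ⟨q ^ e - 1, by rw [mul_comm, pow_mul, ← mul_self_tsub_one, sq]⟩
    have h₂ : d ∣ Nat.gcd (q ^ (2 * e) - 1) (q ^ (2 * e + 2) - 1) :=
      Nat.dvd_gcd ((Nat.gcd_dvd_left _ _).trans h₁) (Nat.gcd_dvd_right _ _)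
    rwa [Nat.pow_sub_one_gcd_pow_sub_one, show Nat.gcd (2 * e) (2 * e + 2) = 2 by simp] at h₂
  have hd_two : d ∣ 2 := by
    have h₁ : d ∣ q ^ e - 1 :=
      hd_sq.trans (Nat.pow_sub_one_dvd_pow_sub_one q (even_iff_two_dvd.mp he))
    have h₂ := Nat.dvd_sub (Nat.gcd_dvd_left _ _) h₁
    rwa [show q ^ e + 1 - (q ^ e - 1) = 2 by have := Nat.one_le_pow e q hq; omega] at h₂
  have hodd : Odd (q ^ (2 * e + 2) - 1) :=
    Nat.Even.sub_odd (Nat.one_le_pow _ _ hq) (Nat.even_pow.mpr ⟨hq_even, by omega⟩) odd_one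
  have h := Nat.dvd_gcd hd_two (Nat.gcd_dvd_right _ _)
  rwa [(Nat.coprime_two_left.mpr hodd).gcd_eq_one, Nat.dvd_one] at h

lemma Finset.eq_zero_of_forall_sum_mul_pow_eq_zero {ι R : Type*} [CommRing R] [IsDomain R]
    {s : Finset ι} {f y : ι → R} (hf : Set.InjOn f s)
    (h : ∀ t < #s, ∑ i ∈ s, y i * f i ^ t = 0) {i : ι} (hi : i ∈ s) : y i = 0 := by
  let g : Fin #s → ι := fun k => s.equivFin.symm k
  have hsum (φ : ι → R) : ∑ i ∈ s, φ i = ∑ k, φ (g k) := by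
    rw [← Finset.sum_coe_sort s, ← Equiv.sum_comp s.equivFin.symm]
  have hg : Function.Injective (f ∘ g) := fun k l hkl =>
    s.equivFin.symm.injective (Subtype.ext (hf (s.equivFin.symm k).2 (s.equivFin.symm l).2 hkl))
  have hyg := Matrix.eq_zero_of_forall_pow_sum_mul_pow_eq_zero (v := y ∘ g) hg
    fun t => by simpa only [hsum, Function.comp_apply] using h t t.2
  simpa [g] using congrFun hyg (s.equivFin ⟨i, hi⟩)

section CyclicCode

variable {F E : Type*} [Field F] [Field E] [Algebra F E] {n : ℕ} {β : E} {T : Set ℕ}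

lemma mem_cyclicCode {x : Fin n → F} :
    x ∈ cyclicCode F E n β T ↔
      ∀ k ∈ T, ∑ j : Fin n, algebraMap F E (x j) * β ^ (k * (j : ℕ)) = 0 :=
  Iff.rfl

lemma one_mem_cyclicCode (hβ : orderOf β = n) (hT : ∀ k ∈ T, 0 < k ∧ k < n) :
    (1 : Fin n → F) ∈ cyclicCode F E n β T := by
  refine mem_cyclicCode.mpr fun k hk => ?_
  have hne : β ^ k ≠ 1 := fun h => by
    have := Nat.le_of_dvd (hT k hk).1 (hβ ▸ orderOf_dvd_of_pow_eq_one h)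
    have := (hT k hk).2
    omega
  simp only [Pi.one_apply, map_one, one_mul, pow_mul]
  rw [Fin.sum_univ_eq_sum_range (fun j => (β ^ k) ^ j) n, geom_sum_eq hne, ← pow_mul, mul_comm,
    pow_mul, ← hβ, pow_orderOf_eq_one, one_pow, sub_self, zero_div]

lemma lt_hammingNorm_of_mem_cyclicCode [DecidableEq F] (hβ : orderOf β = n) {a c L : ℕ}
    (hc : c.Coprime n) (hT : ∀ t < L, a + t * c ∈ T) {x : Fin n → F}
    (hx : x ∈ cyclicCode F E n β T) (hx0 : x ≠ 0) : L < hammingNorm x := by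
  set s : Finset (Fin n) := {j | x j ≠ 0}
  obtain ⟨j, hj⟩ : s.Nonempty := by
    rw [Finset.nonempty_iff_ne_empty, Ne, Finset.filter_eq_empty_iff]
    exact fun h => hx0 (funext fun j => by simpa using h (Finset.mem_univ j))
  have hβ0 : β ≠ 0 := by
    rintro rfl
    rw [orderOf_zero] at hβ
    exact absurd j.isLt (by omega)
  by_contra! hL
  have hsum : ∀ t < #s,
      ∑ j ∈ s, (algebraMap F E (x j) * β ^ (a * j)) * ((β ^ c) ^ (j : ℕ)) ^ t = 0 := by
    intro t ht
    rw [← mem_cyclicCode.mp hx (a + t * c) (hT t (ht.trans_le hL))]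
    calc _ = ∑ j ∈ s, algebraMap F E (x j) * β ^ ((a + t * c) * j) :=
          Finset.sum_congr rfl fun j _ => by ring
      _ = _ := Finset.sum_filter_of_ne fun j _ h hj => by simp [hj] at h
  have hord : orderOf (β ^ c) = n := by
    rw [Nat.Coprime.orderOf_pow (by rw [hβ]; exact hc.symm), hβ]
  have hinj : Set.InjOn (fun j : Fin n => (β ^ c) ^ (j : ℕ)) s := fun i _ j _ hij =>
    Fin.ext (pow_injOn_Iio_orderOf (by simp [hord]) (by simp [hord]) hij)
  have hy := Finset.eq_zero_of_forall_sum_mul_pow_eq_zero hinj hsum hj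
  exact (Finset.mem_filter.mp hj).2 (by simpa [hβ0] using hy)

lemma le_minDist_of_forall_le_hammingNorm [DecidableEq F] {C : Submodule F (Fin n → F)}
    {d : ℕ} (hC : ∃ x ∈ C, x ≠ 0) (h : ∀ x ∈ C, x ≠ 0 → d ≤ hammingNorm x) :
    d ≤ minDist C := by
  obtain ⟨x, hx, hx0⟩ := hC
  refine le_csInf ⟨_, x, hx, hx0, rfl⟩ ?_
  rintro _ ⟨y, hy, hy0, rfl⟩
  exact h y hy hy0

theorem succ_le_minDist_cyclicCode [DecidableEq F] (hβ : orderOf β = n) (hn : 0 < n)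
    (hT : ∀ k ∈ T, 0 < k ∧ k < n) {a c L : ℕ} (hc : c.Coprime n)
    (hAP : ∀ t < L, a + t * c ∈ T) :
    L + 1 ≤ minDist (cyclicCode F E n β T) := by
  have : NeZero n := ⟨hn.ne'⟩
  exact le_minDist_of_forall_le_hammingNorm ⟨1, one_mem_cyclicCode hβ hT, one_ne_zero⟩
    fun x hx hx0 => lt_hammingNorm_of_mem_cyclicCode hβ hc hAP hx hx0

end CyclicCode

theorem stmt12_general (s q m n : ℕ) (hs : 2 ≤ s) (hq : q = 2 ^ s)
    (hmod4 : m % 4 = 2) (hn : n = q ^ m - 1)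
    (F E : Type*) [Field F] [DecidableEq F] [Field E] [Algebra F E]
    (β : E) (hβ : orderOf β = n) :
    (m = 2 → (q + 2) / 2 ≤ minDist (cyclicCode F E n β (Tset q m 1))) ∧
    (6 ≤ m → q ^ ((m - 2) / 2) + 2 * q - 1 ≤ minDist (cyclicCode F E n β (Tset q m 1))) := by
  have hq₄ : 4 ≤ q := hq ▸ Nat.pow_le_pow_right two_pos hs
  have hq_even : Even q := hq ▸ Nat.even_pow.mpr ⟨even_two, by omega⟩
  obtain ⟨e, rfl⟩ : ∃ e, m = 2 * e + 2 := ⟨m / 2 - 1, by omega⟩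
  have he : Even e := Nat.even_iff.mpr (by omega)
  have hn_pos : 0 < n := hn ▸ Nat.sub_pos_of_lt (Nat.one_lt_pow (by omega) (by omega))
  have hT : ∀ k ∈ Tset q (2 * e + 2) 1, 0 < k ∧ k < n :=
    fun k ⟨hk₁, hk₂, _⟩ => ⟨hk₁, by omega⟩
  have hc : (q ^ e + 1).Coprime n := hn ▸ coprime_pow_add_one_pow_sub_one (by omega) hq_even he
  refine ⟨fun hm => ?_, fun hm => ?_⟩
  · obtain rfl : e = 0 := by omega
    have := succ_le_minDist_cyclicCode (F := F) hβ hn_pos hT (L := q / 2) (by simpa using hc)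
      fun t ht => add_mul_two_mem_Tset_two (by omega)
    omega
  · have := succ_le_minDist_cyclicCode (F := F) hβ hn_pos hT hc
      fun t ht => sq_mul_sub_add_mul_mem_Tset hq₄ (by omega) ht
    rw [show (2 * e + 2 - 2) / 2 = e by omega]
    omega

theorem stmt12 (s q m n : ℕ) (hs : 2 ≤ s) (hq : q = 2 ^ s)
    (hm : 2 ≤ m) (hmod4 : m % 4 = 2) (hn : n = q ^ m - 1)
    (F E : Type*) [Field F] [Fintype F] [DecidableEq F] [Field E] [Fintype E] [Algebra F E]
    (hF : Fintype.card F = q) (hE : Fintype.card E = q ^ m)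
    (β : E) (hβ : orderOf β = n) :
    (m = 2 → (q + 2) / 2 ≤ minDist (cyclicCode F E n β (Tset q m 1))) ∧
    (6 ≤ m → q ^ ((m - 2) / 2) + 2 * q - 1 ≤ minDist (cyclicCode F E n β (Tset q m 1))) :=
  stmt12_general s q m n hs hq hmod4 hn F E β hβ
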